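/- arXiv:2308.08676 — 4 statements merged into one kernel-verified Lean document; each statement's English description precedes it below -/
import Mathlib

section
/- For the generalized Bernoulli-Laplace chain with n balls, r red balls, left urn size m, and swap size k, the function s1(x) = 1 - (n/(r m)) x is a right eigenfunction of the transition kernel with eigenvalue λ1 = 1 - n k / (m (n - m)); that is, if X1 = x - H1 + H2 with H1 ~ Hyp(m, x, k) and H2 ~ Hyp(n-m, r-x, k) independent, then E[s1(X1)] = λ1 · s1(x). -/
open MeasureTheory

/-! Because `s1` is affine, `E[s1(X1)] = s1(E[X1])`, and the mean map
`x ↦ E[X1] = x - kx/m + k(r-x)/(n-m)` is affine with slope `λ1` and fixed point `rm/n`,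
the zero of `s1`. -/

section

variable {Ω : Type*} [MeasurableSpace Ω] {μ : Measure Ω} [IsProbabilityMeasure μ]

theorem integral_const_sub_mul {X : Ω → ℝ} (hX : Integrable X μ) (a b : ℝ) :
    ∫ ω, (a - b * X ω) ∂μ = a - b * ∫ ω, X ω ∂μ := by
  rw [integral_sub (integrable_const a) (hX.const_mul b), integral_const, integral_const_mul,
    probReal_univ, one_smul]

theorem integral_const_sub_add {X Y : Ω → ℝ} (hX : Integrable X μ) (hY : Integrable Y μ)
    (x : ℝ) :
    ∫ ω, (x - X ω + Y ω) ∂μ = x - ∫ ω, X ω ∂μ + ∫ ω, Y ω ∂μ := by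
  rw [integral_add (f := fun ω ↦ x - X ω) ((integrable_const x).sub hX) hY,
    integral_sub (integrable_const x) hX, integral_const, probReal_univ, one_smul]

end

theorem bernoulliLaplace_s1_mean_eq (n m r k x : ℝ) (hr : r ≠ 0) (hm : m ≠ 0)
    (hnm : n - m ≠ 0) :
    1 - n / (r * m) * (x - k * x / m + k * (r - x) / (n - m))
      = (1 - n * k / (m * (n - m))) * (1 - n / (r * m) * x) := by
  field_simp
  ring

theorem bl_s1_eigenfunction_general {Ω : Type*} [MeasurableSpace Ω]
    (μ : Measure Ω) [IsProbabilityMeasure μ]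
    (n m r k : ℕ) (hr : 0 < r) (hm : 0 < m) (hmn : m < n)
    (x : ℝ) (H1 H2 : Ω → ℝ)
    (hH1 : Integrable H1 μ) (hH2 : Integrable H2 μ)
    (hEH1 : ∫ ω, H1 ω ∂μ = (k : ℝ) * x / m)
    (hEH2 : ∫ ω, H2 ω ∂μ = (k : ℝ) * ((r : ℝ) - x) / ((n : ℝ) - m)) :
    ∫ ω, (1 - (n : ℝ) / ((r : ℝ) * m) * (x - H1 ω + H2 ω)) ∂μ
      = (1 - (n : ℝ) * k / ((m : ℝ) * ((n : ℝ) - m))) * (1 - (n : ℝ) / ((r : ℝ) * m) * x) := by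
  have hnm : (n : ℝ) - m ≠ 0 := sub_ne_zero.mpr (by exact_mod_cast hmn.ne')
  rw [integral_const_sub_mul (X := fun ω ↦ x - H1 ω + H2 ω)
      (((integrable_const x).sub hH1).add hH2),
    integral_const_sub_add hH1 hH2, hEH1, hEH2]
  exact bernoulliLaplace_s1_mean_eq _ _ _ _ _ (by positivity) (by positivity) hnm

/-- `s1(x) = 1 - (n/(rm))x` is a right eigenfunction of the generalized
Bernoulli-Laplace transition kernel with eigenvalue `λ1 = 1 - nk/(m(n-m))`. -/
theorem bl_s1_eigenfunction {Ω : Type*} [MeasurableSpace Ω]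
    (μ : Measure Ω) [IsProbabilityMeasure μ]
    (n m r k : ℕ) (hr : 0 < r) (hm : 0 < m) (hmn : m < n) (hk : k ≤ m) (hm2 : 2 * m ≤ n)
    (x : ℝ) (H1 H2 : Ω → ℝ)
    (hH1 : Integrable H1 μ) (hH2 : Integrable H2 μ)
    (hEH1 : ∫ ω, H1 ω ∂μ = (k : ℝ) * x / m)
    (hEH2 : ∫ ω, H2 ω ∂μ = (k : ℝ) * ((r : ℝ) - x) / ((n : ℝ) - m)) :
    ∫ ω, (1 - (n : ℝ) / ((r : ℝ) * m) * (x - H1 ω + H2 ω)) ∂μ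
      = (1 - (n : ℝ) * k / ((m : ℝ) * ((n : ℝ) - m))) * (1 - (n : ℝ) / ((r : ℝ) * m) * x) :=
  bl_s1_eigenfunction_general μ n m r k hr hm hmn x H1 H2 hH1 hH2 hEH1 hEH2
end

section
/- For the generalized Bernoulli-Laplace chain, the function s2(x) = 1 - (2(n-1)/(r m)) x + ((n-1)(n-2)/(r(r-1)m(m-1))) x(x-1) is a right eigenfunction of the one-step transition kernel with eigenvalue λ2 = 1 - 2(n-1)k/(m(n-m)) + (n-1)(n-2)k(k-1)/(m(m-1)(n-m)(n-m-1)); that is, E_x[s2(X1)] = λ2 · s2(x). -/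
open MeasureTheory


set_option maxHeartbeats 1000000 in
private lemma bl_key (N M R K X : ℝ) (hm0 : M ≠ 0) (hm1 : M - 1 ≠ 0)
    (hr0 : R ≠ 0) (hr1 : R - 1 ≠ 0) (hnm0 : N - M ≠ 0) (hnm1 : N - M - 1 ≠ 0) :
    1 - 2 * (N - 1) / (R * M) * X
      + (N - 1) * (N - 2) / (R * (R - 1) * M * (M - 1)) * (X ^ 2 - X)
    + ((2 * (N - 1) / (R * M)
          + (N - 1) * (N - 2) / (R * (R - 1) * M * (M - 1)) * (1 - 2 * X)
          + (N - 1) * (N - 2) / (R * (R - 1) * M * (M - 1))) * (K * X / M)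
    + ((-(2 * (N - 1) / (R * M))
          + (N - 1) * (N - 2) / (R * (R - 1) * M * (M - 1)) * (2 * X - 1)
          + (N - 1) * (N - 2) / (R * (R - 1) * M * (M - 1))) * (K * (R - X) / (N - M))
    + ((N - 1) * (N - 2) / (R * (R - 1) * M * (M - 1))
          * (K * (K - 1) * X * (X - 1) / (M * (M - 1)))
    + ((N - 1) * (N - 2) / (R * (R - 1) * M * (M - 1))
          * (K * (K - 1) * (R - X) * (R - X - 1) / ((N - M) * (N - M - 1)))
    + (-(2 * ((N - 1) * (N - 2) / (R * (R - 1) * M * (M - 1)))))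
          * ((K * X / M) * (K * (R - X) / (N - M)))))))
    = (1 - 2 * (N - 1) * K / (M * (N - M))
        + (N - 1) * (N - 2) * K * (K - 1) / (M * (M - 1) * (N - M) * (N - M - 1)))
      * (1 - 2 * (N - 1) / (R * M) * X
          + (N - 1) * (N - 2) / (R * (R - 1) * M * (M - 1)) * (X * (X - 1))) := by
  set a : ℝ := 2 * (N - 1) / (R * M) with ha
  set b : ℝ := (N - 1) * (N - 2) / (R * (R - 1) * M * (M - 1)) with hb
  have h10 : -(a * R) / (N - M) - b / ((N - M) * (N - M - 1)) * (R ^ 2 - R)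
      = -(2 * (N - 1) / (M * (N - M))
          + (N - 1) * (N - 2) / (M * (M - 1) * (N - M) * (N - M - 1))) := by
    simp only [ha, hb]; field_simp; ring
  have h11 : (a + 2 * b) / M + (a + 2 * b * R) / (N - M) + b / (M * (M - 1))
        - b / ((N - M) * (N - M - 1)) * (1 - 2 * R)
      = (2 * (N - 1) / (M * (N - M))
          + (N - 1) * (N - 2) / (M * (M - 1) * (N - M) * (N - M - 1))) * (a + b) := by
    simp only [ha, hb]; field_simp; ring
  have h12 : -(2 * b) / M - 2 * b / (N - M) - b / (M * (M - 1))
        - b / ((N - M) * (N - M - 1))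
      = -((2 * (N - 1) / (M * (N - M))
          + (N - 1) * (N - 2) / (M * (M - 1) * (N - M) * (N - M - 1))) * b) := by
    simp only [ha, hb]; field_simp; ring
  have h20 : b / ((N - M) * (N - M - 1)) * (R ^ 2 - R)
      = (N - 1) * (N - 2) / (M * (M - 1) * (N - M) * (N - M - 1)) * (R * (R - 1) / (R * (R - 1))) := by
    simp only [hb]; field_simp
  have h21 : -(b / (M * (M - 1))) + b / ((N - M) * (N - M - 1)) * (1 - 2 * R)
        - 2 * b * R / M / (N - M)
      = -((N - 1) * (N - 2) / (M * (M - 1) * (N - M) * (N - M - 1)) * (a + b)) := by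
    simp only [ha, hb]; field_simp; ring
  have h22 : b / (M * (M - 1)) + b / ((N - M) * (N - M - 1)) + 2 * b / M / (N - M)
      = (N - 1) * (N - 2) / (M * (M - 1) * (N - M) * (N - M - 1)) * b := by
    simp only [ha, hb]; field_simp; ring
  have hq : R * (R - 1) / (R * (R - 1)) = 1 := by field_simp
  calc 1 - a * X + b * (X ^ 2 - X)
      + ((a + b * (1 - 2 * X) + b) * (K * X / M)
      + ((-a + b * (2 * X - 1) + b) * (K * (R - X) / (N - M))
      + (b * (K * (K - 1) * X * (X - 1) / (M * (M - 1)))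
      + (b * (K * (K - 1) * (R - X) * (R - X - 1) / ((N - M) * (N - M - 1)))
      + (-(2 * b)) * ((K * X / M) * (K * (R - X) / (N - M)))))))
      = (1 + (-(a + b)) * X + b * X ^ 2)
        + K * ((-(a * R) / (N - M) - b / ((N - M) * (N - M - 1)) * (R ^ 2 - R))
          + ((a + 2 * b) / M + (a + 2 * b * R) / (N - M) + b / (M * (M - 1))
              - b / ((N - M) * (N - M - 1)) * (1 - 2 * R)) * X
          + (-(2 * b) / M - 2 * b / (N - M) - b / (M * (M - 1))
              - b / ((N - M) * (N - M - 1))) * X ^ 2)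
        + K ^ 2 * ((b / ((N - M) * (N - M - 1)) * (R ^ 2 - R))
          + (-(b / (M * (M - 1))) + b / ((N - M) * (N - M - 1)) * (1 - 2 * R)
              - 2 * b * R / M / (N - M)) * X
          + (b / (M * (M - 1)) + b / ((N - M) * (N - M - 1)) + 2 * b / M / (N - M)) * X ^ 2) := by
        ring
    _ = (1 + (-(a + b)) * X + b * X ^ 2)
        + K * (-(2 * (N - 1) / (M * (N - M))
              + (N - 1) * (N - 2) / (M * (M - 1) * (N - M) * (N - M - 1)))
          + ((2 * (N - 1) / (M * (N - M))
              + (N - 1) * (N - 2) / (M * (M - 1) * (N - M) * (N - M - 1))) * (a + b)) * X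
          + (-((2 * (N - 1) / (M * (N - M))
              + (N - 1) * (N - 2) / (M * (M - 1) * (N - M) * (N - M - 1))) * b)) * X ^ 2)
        + K ^ 2 * (((N - 1) * (N - 2) / (M * (M - 1) * (N - M) * (N - M - 1))
                * (R * (R - 1) / (R * (R - 1))))
          + (-((N - 1) * (N - 2) / (M * (M - 1) * (N - M) * (N - M - 1)) * (a + b))) * X
          + ((N - 1) * (N - 2) / (M * (M - 1) * (N - M) * (N - M - 1)) * b) * X ^ 2) := by
        rw [h10, h11, h12, h20, h21, h22]
    _ = (1 - 2 * (N - 1) * K / (M * (N - M))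
          + (N - 1) * (N - 2) * K * (K - 1) / (M * (M - 1) * (N - M) * (N - M - 1)))
        * (1 - a * X + b * (X * (X - 1))) := by
        rw [hq]; ring

set_option maxHeartbeats 1000000 in
/-- `s2` is a right eigenfunction of the one-step Bernoulli-Laplace transition
kernel with eigenvalue `λ2`. -/
theorem bl_s2_eigenfunction {Ω : Type*} [MeasurableSpace Ω]
    (μ : Measure Ω) [IsProbabilityMeasure μ]
    (n m r k : ℕ) (hm : 2 ≤ m) (hr : 2 ≤ r) (hmn : m + 2 ≤ n) (hk : k ≤ m)
    (hnm : 2 ≤ n - m)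
    (x : ℝ) (H1 H2 : Ω → ℝ)
    (hH1 : Integrable H1 μ) (hH2 : Integrable H2 μ)
    (hH1sq : Integrable (fun ω => H1 ω ^ 2) μ)
    (hH2sq : Integrable (fun ω => H2 ω ^ 2) μ)
    (hH12 : Integrable (fun ω => H1 ω * H2 ω) μ)
    (hEH1 : ∫ ω, H1 ω ∂μ = (k : ℝ) * x / m)
    (hEH2 : ∫ ω, H2 ω ∂μ = (k : ℝ) * ((r : ℝ) - x) / ((n : ℝ) - m))
    (hEH1f : ∫ ω, H1 ω * (H1 ω - 1) ∂μ
      = (k : ℝ) * ((k : ℝ) - 1) * x * (x - 1) / ((m : ℝ) * ((m : ℝ) - 1)))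
    (hEH2f : ∫ ω, H2 ω * (H2 ω - 1) ∂μ
      = (k : ℝ) * ((k : ℝ) - 1) * ((r : ℝ) - x) * ((r : ℝ) - x - 1)
          / (((n : ℝ) - m) * ((n : ℝ) - m - 1)))
    (hindep : ∫ ω, H1 ω * H2 ω ∂μ = (∫ ω, H1 ω ∂μ) * ∫ ω, H2 ω ∂μ) :
    ∫ ω, (1 - 2 * ((n : ℝ) - 1) / ((r : ℝ) * m) * (x - H1 ω + H2 ω)
        + ((n : ℝ) - 1) * ((n : ℝ) - 2)
            / ((r : ℝ) * ((r : ℝ) - 1) * m * ((m : ℝ) - 1))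
          * ((x - H1 ω + H2 ω) * (x - H1 ω + H2 ω - 1))) ∂μ
      = (1 - 2 * ((n : ℝ) - 1) * k / ((m : ℝ) * ((n : ℝ) - m))
          + ((n : ℝ) - 1) * ((n : ℝ) - 2) * k * ((k : ℝ) - 1)
              / ((m : ℝ) * ((m : ℝ) - 1) * ((n : ℝ) - m) * ((n : ℝ) - m - 1)))
        * (1 - 2 * ((n : ℝ) - 1) / ((r : ℝ) * m) * x
            + ((n : ℝ) - 1) * ((n : ℝ) - 2)
                / ((r : ℝ) * ((r : ℝ) - 1) * m * ((m : ℝ) - 1)) * (x * (x - 1))) := by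
  have hmR : (2:ℝ) ≤ m := by exact_mod_cast hm
  have hrR : (2:ℝ) ≤ r := by exact_mod_cast hr
  have hnmR : (2:ℝ) ≤ (n:ℝ) - m := by
    have : ((m:ℝ) + 2) ≤ n := by exact_mod_cast hmn
    linarith
  have hm0 : (m:ℝ) ≠ 0 := by linarith
  have hm1 : (m:ℝ) - 1 ≠ 0 := by linarith
  have hr0 : (r:ℝ) ≠ 0 := by linarith
  have hr1 : (r:ℝ) - 1 ≠ 0 := by linarith
  have hnm0 : (n:ℝ) - m ≠ 0 := by linarith
  have hnm1 : (n:ℝ) - m - 1 ≠ 0 := by linarith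
  set a : ℝ := 2 * ((n:ℝ) - 1) / ((r:ℝ) * m) with ha
  set b : ℝ := ((n:ℝ) - 1) * ((n:ℝ) - 2) / ((r:ℝ) * ((r:ℝ) - 1) * m * ((m:ℝ) - 1)) with hb
  have hIf1 : Integrable (fun ω => H1 ω * (H1 ω - 1)) μ := by
    refine (hH1sq.sub hH1).congr (Filter.Eventually.of_forall fun ω => ?_)
    show H1 ω ^ 2 - H1 ω = H1 ω * (H1 ω - 1)
    ring
  have hIf2 : Integrable (fun ω => H2 ω * (H2 ω - 1)) μ := by
    refine (hH2sq.sub hH2).congr (Filter.Eventually.of_forall fun ω => ?_)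
    show H2 ω ^ 2 - H2 ω = H2 ω * (H2 ω - 1)
    ring
  have i1 : Integrable (fun ω => (a + b * (1 - 2*x) + b) * H1 ω) μ := hH1.const_mul _
  have i2 : Integrable (fun ω => (-a + b * (2*x - 1) + b) * H2 ω) μ := hH2.const_mul _
  have i3 : Integrable (fun ω => b * (H1 ω * (H1 ω - 1))) μ := hIf1.const_mul _
  have i4 : Integrable (fun ω => b * (H2 ω * (H2 ω - 1))) μ := hIf2.const_mul _
  have i5 : Integrable (fun ω => (-(2*b)) * (H1 ω * H2 ω)) μ := hH12.const_mul _
  have hfun : (fun ω => (1 - a * (x - H1 ω + H2 ω)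
        + b * ((x - H1 ω + H2 ω) * (x - H1 ω + H2 ω - 1))))
      = fun ω => (1 - a * x + b * (x^2 - x))
        + ((a + b * (1 - 2*x) + b) * H1 ω
        + ((-a + b * (2*x - 1) + b) * H2 ω
        + (b * (H1 ω * (H1 ω - 1))
        + (b * (H2 ω * (H2 ω - 1))
        + (-(2*b)) * (H1 ω * H2 ω))))) := funext fun ω => by ring
  have j4 : Integrable (fun ω => b * (H2 ω * (H2 ω - 1))
      + (-(2*b)) * (H1 ω * H2 ω)) μ := i4.add i5
  have j3 : Integrable (fun ω => b * (H1 ω * (H1 ω - 1))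
      + (b * (H2 ω * (H2 ω - 1)) + (-(2*b)) * (H1 ω * H2 ω))) μ := i3.add j4
  have j2 : Integrable (fun ω => (-a + b * (2*x - 1) + b) * H2 ω
      + (b * (H1 ω * (H1 ω - 1))
      + (b * (H2 ω * (H2 ω - 1)) + (-(2*b)) * (H1 ω * H2 ω)))) μ := i2.add j3
  have j1 : Integrable (fun ω => (a + b * (1 - 2*x) + b) * H1 ω
      + ((-a + b * (2*x - 1) + b) * H2 ω
      + (b * (H1 ω * (H1 ω - 1))
      + (b * (H2 ω * (H2 ω - 1)) + (-(2*b)) * (H1 ω * H2 ω))))) μ := i1.add j2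
  rw [hfun,
    integral_add (integrable_const _) j1,
    integral_add i1 j2,
    integral_add i2 j3,
    integral_add i3 j4,
    integral_add i4 i5,
    integral_const_mul, integral_const_mul, integral_const_mul, integral_const_mul,
    integral_const_mul, integral_const, hindep, hEH1, hEH2, hEH1f, hEH2f]
  simp only [measure_univ, probReal_univ, ENNReal.toReal_one, smul_eq_mul, one_mul]
  rw [ha, hb]
  linear_combination bl_key (n:ℝ) (m:ℝ) (r:ℝ) (k:ℝ) x hm0 hm1 hr0 hr1 hnm0 hnm1
end

section
/- With s1(x) = 1 - (n/(rm))x and s2(x) = 1 - (2(n-1)/(rm))x + ((n-1)(n-2)/(r(r-1)m(m-1)))x(x-1), one has the algebraic identity s1(x)² = b0 + b1·s1(x) + b2·s2(x) for all x, where b0 = (n-m)(n-r)/((n-1)rm), b1 = -(n-2r)(n-2m)/((n-2)rm), and b2 = n²(r-1)(m-1)/((n-1)(n-2)rm). -/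
/-- the algebraic identity `s1(x)² = b0 + b1·s1(x) + b2·s2(x)`. -/
theorem bl_s1_sq_identity (n m r : ℕ) (hn : 3 ≤ n) (hr : 2 ≤ r) (hm : 2 ≤ m) :
    ∀ x : ℝ,
      (1 - (n : ℝ) / ((r : ℝ) * m) * x) ^ 2
        = ((n : ℝ) - m) * ((n : ℝ) - r) / (((n : ℝ) - 1) * r * m)
          + (-(((n : ℝ) - 2 * r) * ((n : ℝ) - 2 * m)) / (((n : ℝ) - 2) * r * m))
              * (1 - (n : ℝ) / ((r : ℝ) * m) * x)
          + ((n : ℝ) ^ 2 * ((r : ℝ) - 1) * ((m : ℝ) - 1)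
                / (((n : ℝ) - 1) * ((n : ℝ) - 2) * r * m))
              * (1 - 2 * ((n : ℝ) - 1) / ((r : ℝ) * m) * x
                  + ((n : ℝ) - 1) * ((n : ℝ) - 2)
                      / ((r : ℝ) * ((r : ℝ) - 1) * m * ((m : ℝ) - 1)) * (x * (x - 1))) := by
  intro x
  have hn' : (3 : ℝ) ≤ n := by exact_mod_cast hn
  have hr' : (2 : ℝ) ≤ r := by exact_mod_cast hr
  have hm' : (2 : ℝ) ≤ m := by exact_mod_cast hm
  have h1 : (n : ℝ) - 1 ≠ 0 := by linarith
  have h2 : (n : ℝ) - 2 ≠ 0 := by linarith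
  have h3 : (r : ℝ) ≠ 0 := by linarith
  have h4 : (m : ℝ) ≠ 0 := by linarith
  have h5 : (r : ℝ) - 1 ≠ 0 := by linarith
  have h6 : (m : ℝ) - 1 ≠ 0 := by linarith
  field_simp
  ring
end

section
/- The hypergeometric distribution Hyp(n, r, m) with mass function π(j) = C(r,j)·C(n-r, m-j)/C(n,m) is a stationary distribution for the generalized Bernoulli-Laplace chain: if X0 ~ Hyp(n, r, m) and X1 = X0 - H1 + H2 with H1 ~ Hyp(m, X0, k), H2 ~ Hyp(n-m, r - X0, k) conditionally independent given X0, then X1 ~ Hyp(n, r, m). -/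
/-- The hypergeometric probability mass function: `s` draws without replacement from a
population of `N` balls of which `K` are marked; probability of drawing `j` marked balls. -/
noncomputable def hypPMF (N K s j : ℕ) : ℝ :=
  if j ≤ s then (K.choose j * (N - K).choose (s - j) : ℝ) / (N.choose s) else 0

/-! The chain is reversible with respect to `Hyp(n, r, m)`. Weighted by `π(x)`, a move from `x`
in which `j₁` red balls leave the left urn and `j₂` enter it has mass proportional to
`C(r,x) C(x,j₁) C(r-x,j₂) · C(n-r,m-x) C(m-x,k-j₁) C(n-r-(m-x),k-j₂)`. Each of the two
triple products is a multinomial coefficient: it counts the splittings of the red (resp. white)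
balls into four groups — staying left, moving right, moving left, staying right. The reverse
move from `y = x - j₁ + j₂` with `j₁, j₂` exchanged has the same four group sizes, so
`π(x) P(x, y) = π(y) P(y, x)`; summing over `x` and using that the rows of `P` sum to one
(Vandermonde) gives `∑ₓ π(x) P(x, y) = π(y)`. -/

open Finset Nat

def splitCount (N s i j : ℕ) : ℕ := N.choose s * s.choose i * (N - s).choose j

lemma splitCount_ne_zero_iff {N s i j : ℕ} :
    splitCount N s i j ≠ 0 ↔ s ≤ N ∧ i ≤ s ∧ j ≤ N - s := by
  simp only [splitCount, Ne, mul_eq_zero, choose_eq_zero_iff, not_or, not_lt, and_assoc]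

lemma splitCount_mul_factorial (a b c d : ℕ) :
    splitCount (a + b + c + d) (a + b) a c * (a ! * b ! * c ! * d !) = (a + b + c + d)! := by
  have hcd : a + b + c + d - (a + b) = c + d := by omega
  have hab := choose_mul_factorial_mul_factorial (le_add_right a b : a ≤ a + b)
  have hcd' := choose_mul_factorial_mul_factorial (le_add_right c d : c ≤ c + d)
  have hN := choose_mul_factorial_mul_factorial (le_add_right (a + b) (c + d))
  rw [Nat.add_sub_cancel_left] at hab hcd' hN
  rw [splitCount, hcd, show a + b + c + d = a + b + (c + d) by ring, ← hN, ← hab, ← hcd']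
  ring

lemma splitCount_swap {N s s' i j : ℕ} (h : s + j = s' + i) :
    splitCount N s i j = splitCount N s' j i := by
  by_cases hs : s ≤ N ∧ i ≤ s ∧ j ≤ N - s
  · obtain ⟨b, rfl⟩ : ∃ b, s = i + b := ⟨s - i, by omega⟩
    obtain ⟨d, rfl⟩ : ∃ d, N = i + b + j + d := ⟨N - (i + b) - j, by omega⟩
    obtain rfl : s' = j + b := by omega
    have h₁ := splitCount_mul_factorial i b j d
    have h₂ := splitCount_mul_factorial j b i d
    rw [show j + b + i + d = i + b + j + d by ring] at h₂
    refine Nat.eq_of_mul_eq_mul_right (by positivity : 0 < i ! * b ! * j ! * d !) ?_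
    rw [h₁, ← h₂]
    ring
  · have hs' : ¬ (s' ≤ N ∧ j ≤ s' ∧ i ≤ N - s') := by omega
    rw [← splitCount_ne_zero_iff, not_not] at hs hs'
    rw [hs, hs']

lemma bounds_of_hypPMF_ne_zero {N K s j : ℕ} (h : hypPMF N K s j ≠ 0) :
    j ≤ s ∧ j ≤ K ∧ s - j ≤ N - K := by
  unfold hypPMF at h
  split_ifs at h with hjs
  · refine ⟨hjs, ?_, ?_⟩ <;> by_contra hc <;> apply h <;>
      rw [choose_eq_zero_of_lt (not_le.mp hc)] <;> simp
  · exact absurd rfl h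

lemma sum_hypPMF {N K s : ℕ} (hs : s ≤ N) (hK : K ≤ N) :
    ∑ j ∈ range (s + 1), hypPMF N K s j = 1 := by
  have vandermonde :
      ∑ j ∈ range (s + 1), (K.choose j * (N - K).choose (s - j) : ℝ) = N.choose s := by
    have h := Nat.add_choose_eq K (N - K) s
    rw [Nat.add_sub_cancel' hK, Finset.Nat.sum_antidiagonal_eq_sum_range_succ_mk] at h
    exact_mod_cast h.symm
  rw [← div_self (by exact_mod_cast (choose_pos hs).ne' : (N.choose s : ℝ) ≠ 0)]
  nth_rw 1 [← vandermonde]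
  rw [sum_div]
  refine sum_congr rfl fun j hj => ?_
  rw [hypPMF, if_pos (by simpa [Nat.lt_succ_iff] using hj)]

section BernoulliLaplace

variable {n m r k : ℕ}

/-- `j1` red balls leave the left urn and `j2` enter it. -/
noncomputable def blKernel (n m r k x y : ℕ) : ℝ :=
  ∑ j1 ∈ range (k + 1), ∑ j2 ∈ range (k + 1),
    if x + j2 = y + j1 then hypPMF m x k j1 * hypPMF (n - m) (r - x) k j2 else 0

lemma hypPMF_mul_hypPMF_mul_hypPMF {x j1 j2 : ℕ}
    (hxm : x ≤ m) (hxr : x ≤ r) (hj1 : j1 ≤ k) (hj2 : j2 ≤ k) :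
    hypPMF n r m x * (hypPMF m x k j1 * hypPMF (n - m) (r - x) k j2) =
      (splitCount r x j1 j2 * splitCount (n - r) (m - x) (k - j1) (k - j2) : ℝ) /
        (n.choose m * m.choose k * (n - m).choose k) := by
  rw [hypPMF, hypPMF, hypPMF, if_pos hxm, if_pos hj1, if_pos hj2, splitCount, splitCount,
    show n - m - (r - x) = n - r - (m - x) by omega]
  push_cast
  ring

lemma hypPMF_detailed_balance_of_ne_zero {x y j1 j2 : ℕ} (hxy : x + j2 = y + j1)
    (hne : hypPMF n r m x * (hypPMF m x k j1 * hypPMF (n - m) (r - x) k j2) ≠ 0) :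
    hypPMF n r m x * (hypPMF m x k j1 * hypPMF (n - m) (r - x) k j2) =
      hypPMF n r m y * (hypPMF m y k j2 * hypPMF (n - m) (r - y) k j1) := by
  have hne' := right_ne_zero_of_mul hne
  obtain ⟨hxm, hxr, -⟩ := bounds_of_hypPMF_ne_zero (left_ne_zero_of_mul hne)
  obtain ⟨hj1, -, hkx⟩ := bounds_of_hypPMF_ne_zero (left_ne_zero_of_mul hne')
  obtain ⟨hj2, hrx, -⟩ := bounds_of_hypPMF_ne_zero (right_ne_zero_of_mul hne')
  rw [hypPMF_mul_hypPMF_mul_hypPMF hxm hxr hj1 hj2,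
    hypPMF_mul_hypPMF_mul_hypPMF (by omega) (by omega) hj2 hj1,
    splitCount_swap hxy, splitCount_swap (show m - x + (k - j2) = m - y + (k - j1) by omega)]

lemma hypPMF_detailed_balance {x y j1 j2 : ℕ} (hxy : x + j2 = y + j1) :
    hypPMF n r m x * (hypPMF m x k j1 * hypPMF (n - m) (r - x) k j2) =
      hypPMF n r m y * (hypPMF m y k j2 * hypPMF (n - m) (r - y) k j1) := by
  by_cases hx : hypPMF n r m x * (hypPMF m x k j1 * hypPMF (n - m) (r - x) k j2) = 0
  · by_contra hne
    have hy : hypPMF n r m y * (hypPMF m y k j2 * hypPMF (n - m) (r - y) k j1) ≠ 0 :=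
      fun h => hne (hx.trans h.symm)
    exact hne (hypPMF_detailed_balance_of_ne_zero hxy.symm hy).symm
  · exact hypPMF_detailed_balance_of_ne_zero hxy hx

lemma hypPMF_mul_blKernel_comm (x y : ℕ) :
    hypPMF n r m x * blKernel n m r k x y = hypPMF n r m y * blKernel n m r k y x := by
  simp only [blKernel, mul_sum, mul_ite, mul_zero]
  rw [sum_comm]
  refine sum_congr rfl fun j2 _ => sum_congr rfl fun j1 _ => ?_
  by_cases h : x + j2 = y + j1
  · rw [if_pos h, if_pos h.symm, hypPMF_detailed_balance h]
  · rw [if_neg h, if_neg (Ne.symm h)]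

lemma sum_blKernel (hk : k ≤ m) (hm : 2 * m ≤ n) {y : ℕ} (hym : y ≤ m)
    (hry : r - y ≤ n - m) :
    ∑ x ∈ range (n + 1), blKernel n m r k y x = 1 := by
  have unique_target (j1 j2 : ℕ) (hj2 : j2 ∈ range (k + 1)) :
      ∑ x ∈ range (n + 1),
        (if y + j2 = x + j1 then hypPMF m y k j1 * hypPMF (n - m) (r - y) k j2 else 0) =
        hypPMF m y k j1 * hypPMF (n - m) (r - y) k j2 := by
    rcases eq_or_ne (hypPMF m y k j1) 0 with h0 | h0
    · simp only [h0, zero_mul, ite_self, sum_const_zero]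
    · obtain ⟨-, hj1, -⟩ := bounds_of_hypPMF_ne_zero h0
      rw [mem_range] at hj2
      rw [sum_eq_single_of_mem (y + j2 - j1) (mem_range.mpr (by omega))
        (fun x _ hx => if_neg (by omega)), if_pos (by omega)]
  calc ∑ x ∈ range (n + 1), blKernel n m r k y x
      = ∑ j1 ∈ range (k + 1), ∑ j2 ∈ range (k + 1),
          hypPMF m y k j1 * hypPMF (n - m) (r - y) k j2 := by
        unfold blKernel
        rw [sum_comm]
        refine sum_congr rfl fun j1 _ => ?_
        rw [sum_comm]
        exact sum_congr rfl fun j2 hj2 => unique_target j1 j2 hj2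
    _ = (∑ j1 ∈ range (k + 1), hypPMF m y k j1) *
          ∑ j2 ∈ range (k + 1), hypPMF (n - m) (r - y) k j2 := (sum_mul_sum ..).symm
    _ = 1 := by rw [sum_hypPMF hk hym, sum_hypPMF (by omega) hry, mul_one]

end BernoulliLaplace

theorem bl_hypergeometric_stationary_general (n m r k : ℕ)
    (hk : k ≤ m) (hm : 2 * m ≤ n) (hr : r ≤ n) :
    ∀ y : ℕ,
      ∑ x ∈ Finset.range (n + 1),
        hypPMF n r m x *
          ∑ j1 ∈ Finset.range (k + 1), ∑ j2 ∈ Finset.range (k + 1),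
            (if x + j2 = y + j1 then hypPMF m x k j1 * hypPMF (n - m) (r - x) k j2 else 0)
        = hypPMF n r m y := by
  intro y
  change ∑ x ∈ range (n + 1), hypPMF n r m x * blKernel n m r k x y = _
  simp_rw [hypPMF_mul_blKernel_comm _ y, ← mul_sum]
  rcases eq_or_ne (hypPMF n r m y) 0 with hy | hy
  · rw [hy, zero_mul]
  · obtain ⟨hym, -, hry⟩ := bounds_of_hypPMF_ne_zero hy
    rw [sum_blKernel hk hm hym (by omega), mul_one]

/-- `Hyp(n, r, m)` is a stationary distribution for the generalized
Bernoulli-Laplace chain. -/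
theorem bl_hypergeometric_stationary (n m r k : ℕ)
    (hk : k ≤ m) (hm : 2 * m ≤ n) (hr : r ≤ n) (hm0 : 0 < m) :
    ∀ y : ℕ,
      ∑ x ∈ Finset.range (n + 1),
        hypPMF n r m x *
          ∑ j1 ∈ Finset.range (k + 1), ∑ j2 ∈ Finset.range (k + 1),
            (if x + j2 = y + j1 then hypPMF m x k j1 * hypPMF (n - m) (r - x) k j2 else 0)
        = hypPMF n r m y :=
  bl_hypergeometric_stationary_general n m r k hk hm hr
end
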